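/- arXiv:2001.10515 — 2 statements merged into one kernel-verified Lean document; each statement's English description precedes it below -/
import Mathlib

section
/- Let ℓ be a prime, M a finitely generated ℤ_ℓ-module, and φ : M → M a ℤ_ℓ-module automorphism. Define M^(1) := { m ∈ M : φ^n(m) = m for some integer n ≥ 1 }. Then M^(1) is a φ-stable submodule of M and the quotient M / M^(1) is torsion-free as a ℤ_ℓ-module. -/
open Submodule

/-- The torsion submodule of a finitely generated `ℤ_ℓ`-module is finite. -/
lemma finite_torsion_padic (ℓ : ℕ) [Fact ℓ.Prime] (M : Type*) [AddCommGroup M]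
    [Module ℤ_[ℓ] M] [Module.Finite ℤ_[ℓ] M] :
    Finite (Submodule.torsion ℤ_[ℓ] M) := by
  set T := Submodule.torsion ℤ_[ℓ] M
  -- T is finitely generated
  obtain ⟨s, hs⟩ : T.FG := IsNoetherian.noetherian T
  -- there is a nonzero c killing T
  have hkill : ∃ c : ℤ_[ℓ], c ≠ 0 ∧ ∀ t ∈ T, c • t = 0 := by
    have hgen : ∀ g ∈ s, ∃ c : ℤ_[ℓ], c ≠ 0 ∧ c • g = 0 := by
      intro g hg
      have : g ∈ T := hs ▸ subset_span hg
      obtain ⟨⟨a, ha⟩, h⟩ := this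
      exact ⟨a, nonZeroDivisors.ne_zero ha, h⟩
    choose! f hf0 hfk using hgen
    refine ⟨∏ g ∈ s, f g, Finset.prod_ne_zero_iff.mpr (fun g hg => hf0 g hg), ?_⟩
    intro t ht
    have ht' : t ∈ span ℤ_[ℓ] (s : Set M) := hs ▸ ht
    clear ht
    induction ht' using Submodule.span_induction with
    | mem g hg =>
      obtain ⟨u, hu⟩ := Finset.dvd_prod_of_mem f hg
      rw [hu, mul_comm, mul_smul, hfk g hg, smul_zero]
    | zero => simp
    | add a b _ _ ha hb => rw [smul_add, ha, hb, add_zero]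
    | smul r a _ ha => rw [smul_comm, ha, smul_zero]
  obtain ⟨c, hc0, hc⟩ := hkill
  -- hence ℓ^k kills T where k is the valuation of c
  set k := c.valuation with hk
  have hlk : ∀ t ∈ T, ((ℓ : ℤ_[ℓ]) ^ k) • t = 0 := by
    intro t ht
    have hspec := PadicInt.unitCoeff_spec hc0
    set u := PadicInt.unitCoeff hc0 with hu
    have h2 : (((u : ℤ_[ℓ]) * (ℓ : ℤ_[ℓ]) ^ k)) • t = 0 := by
      rw [← hspec]; exact hc t ht
    have h3 : (((u⁻¹ : ℤ_[ℓ]ˣ) : ℤ_[ℓ]) * ((u : ℤ_[ℓ]) * (ℓ : ℤ_[ℓ]) ^ k)) = (ℓ : ℤ_[ℓ]) ^ k := by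
      rw [← mul_assoc, ← Units.val_mul, inv_mul_cancel, Units.val_one, one_mul]
    rw [← h3, mul_smul, h2, smul_zero]
  -- build a surjection from a finite type onto T
  haveI : NeZero (ℓ ^ k) := ⟨pow_ne_zero k (Fact.out (p := ℓ.Prime)).ne_zero⟩
  set F : ((↥s : Type _) → ZMod (ℓ ^ k)) → M :=
    fun v => ∑ g ∈ s.attach, ((v g).val : ℤ_[ℓ]) • (g : M) with hF
  have hFT : ∀ v, F v ∈ T := by
    intro v
    apply Submodule.sum_mem
    intro g _
    exact Submodule.smul_mem _ _ (hs ▸ subset_span g.2)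
  have hsurj : Function.Surjective (fun v => (⟨F v, hFT v⟩ : T)) := by
    rintro ⟨t, ht⟩
    have ht' : t ∈ span ℤ_[ℓ] (s : Set M) := hs ▸ ht
    obtain ⟨f, hf⟩ := mem_span_finset.mp ht'
    refine ⟨fun g => PadicInt.toZModPow k (f (g : M)), ?_⟩
    ext
    simp only [hF]
    rw [Finset.sum_attach s (fun m => (((PadicInt.toZModPow k (f m)).val : ℤ_[ℓ]) • m))]
    rw [← hf.2]
    apply Finset.sum_congr rfl
    intro g hg
    -- coefficients agree modulo ℓ^k, and ℓ^k kills g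
    have hgT : g ∈ T := hs ▸ subset_span hg
    have hker : (((PadicInt.toZModPow k (f g)).val : ℤ_[ℓ]) - f g) ∈
        RingHom.ker (PadicInt.toZModPow (p := ℓ) k) := by
      rw [RingHom.mem_ker, map_sub, map_natCast, ZMod.natCast_val, ZMod.cast_id, sub_self]
    rw [PadicInt.ker_toZModPow, Ideal.mem_span_singleton] at hker
    obtain ⟨e, he⟩ := hker
    have : ((PadicInt.toZModPow k (f g)).val : ℤ_[ℓ]) • g - f g • g = 0 := by
      rw [← sub_smul, he, mul_comm, mul_smul]
      have := hlk g hgT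
      rw [this, smul_zero]
    exact sub_eq_zero.mp this
  exact Finite.of_surjective _ hsurj

/-- For a finitely generated `ℤ_ℓ`-module `M` with an automorphism `φ`, the set
`M^(1) = {m | φ^n m = m for some n ≥ 1}` is a `φ`-stable submodule, and `M / M^(1)` is a
torsion-free `ℤ_ℓ`-module. -/
theorem stmt13 (ℓ : ℕ) [Fact ℓ.Prime] (M : Type*) [AddCommGroup M] [Module ℤ_[ℓ] M]
    [Module.Finite ℤ_[ℓ] M] (φ : M ≃ₗ[ℤ_[ℓ]] M) :
    ∃ S : Submodule ℤ_[ℓ] M,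
      ((S : Set M) = {m : M | ∃ n : ℕ, 1 ≤ n ∧ (φ ^ n) m = m}) ∧
      (∀ m ∈ S, φ m ∈ S) ∧
      ∀ (c : ℤ_[ℓ]) (x : M ⧸ S), c • x = 0 → c = 0 ∨ x = 0 := by
  classical
  -- the submodule S = M^(1)
  refine ⟨{
    carrier := {m : M | ∃ n : ℕ, 1 ≤ n ∧ (φ ^ n) m = m}
    add_mem' := ?_
    zero_mem' := ⟨1, le_refl 1, by simp⟩
    smul_mem' := ?_ }, rfl, ?_, ?_⟩
  · rintro a b ⟨n, hn, ha⟩ ⟨q, hq, hb⟩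
    refine ⟨n * q, Nat.one_le_iff_ne_zero.mpr (by positivity), ?_⟩
    rw [map_add]
    have ha' : (φ ^ (n * q)) a = a := by
      rw [LinearEquiv.pow_apply, Function.iterate_mul]
      rw [LinearEquiv.pow_apply] at ha
      exact Function.iterate_fixed ha q
    have hb' : (φ ^ (n * q)) b = b := by
      rw [mul_comm, LinearEquiv.pow_apply, Function.iterate_mul]
      rw [LinearEquiv.pow_apply] at hb
      exact Function.iterate_fixed hb n
    rw [ha', hb']
  · rintro c a ⟨n, hn, ha⟩
    exact ⟨n, hn, by rw [map_smul, ha]⟩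
  · -- φ-stability
    rintro m ⟨n, hn, hm⟩
    refine ⟨n, hn, ?_⟩
    simp only [LinearEquiv.pow_apply] at hm ⊢
    rw [← Function.iterate_succ_apply, Function.iterate_succ_apply', hm]
  · -- torsion-freeness of the quotient
    intro c x hcx
    by_cases hc : c = 0
    · exact Or.inl hc
    right
    obtain ⟨m, rfl⟩ := Submodule.Quotient.mk_surjective _ x
    rw [← Submodule.Quotient.mk_smul, Submodule.Quotient.mk_eq_zero] at hcx
    obtain ⟨n, hn, hfix⟩ := hcx
    set T := Submodule.torsion ℤ_[ℓ] M with hT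
    -- φ^n maps torsion into torsion
    have hmapT : ∀ t ∈ T, (φ ^ n) t ∈ T := by
      rintro t ⟨a, ha⟩
      refine ⟨a, ?_⟩
      rw [Submonoid.smul_def] at ha ⊢
      rw [← map_smul, ha, map_zero]
    -- all elements (φ^n)^j m - m are torsion
    have hy : ∀ j : ℕ, ((φ ^ n) ^ j) m - m ∈ T := by
      intro j
      induction j with
      | zero => simp
      | succ j ih =>
        have key : ((φ ^ n) ^ (j + 1)) m - m =
            (φ ^ n) (((φ ^ n) ^ j) m - m) + ((φ ^ n) m - m) := by
          simp only [LinearEquiv.pow_apply, Function.iterate_succ_apply', map_sub]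
          abel
        rw [key]
        refine T.add_mem (hmapT _ ih) ?_
        refine ⟨⟨c, mem_nonZeroDivisors_of_ne_zero hc⟩, ?_⟩
        rw [Submonoid.smul_def]
        show c • ((φ ^ n) m - m) = 0
        rw [smul_sub, ← map_smul, hfix, sub_self]
    -- pigeonhole: T is finite
    haveI := finite_torsion_padic ℓ M
    obtain ⟨i, j, hij, heq⟩ :=
      Finite.exists_ne_map_eq_of_infinite (fun j : ℕ => (⟨((φ ^ n) ^ j) m - m, hy j⟩ : T))
    have heq' : ((φ ^ n) ^ i) m = ((φ ^ n) ^ j) m := by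
      have := Subtype.ext_iff.mp heq
      simpa [sub_left_inj] using this
    -- wlog i < j
    have main : ∀ i j : ℕ, i < j → ((φ ^ n) ^ i) m = ((φ ^ n) ^ j) m →
        ∃ k : ℕ, 1 ≤ k ∧ (φ ^ k) m = m := by
      intro i j hlt he
      refine ⟨n * (j - i), Nat.one_le_iff_ne_zero.mpr ?_, ?_⟩
      · have : 0 < j - i := Nat.sub_pos_of_lt hlt
        positivity
      · have hj : (j - i) + i = j := Nat.sub_add_cancel hlt.le
        have h2 : ((φ ^ n) ^ i) (((φ ^ n) ^ (j - i)) m) = ((φ ^ n) ^ i) m := by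
          simp only [LinearEquiv.pow_apply] at he ⊢
          rw [← Function.iterate_add_apply, Nat.add_sub_cancel' hlt.le]
          exact he.symm
        have h3 : ((φ ^ n) ^ (j - i)) m = m := ((φ ^ n) ^ i).injective h2
        rw [pow_mul]
        exact h3
    rw [Submodule.Quotient.mk_eq_zero]
    rcases hij.lt_or_gt with h | h
    · exact main i j h heq'
    · exact main j i h heq'.symm
end

section
/- Let p be a prime, D an abelian group such that D ≅ ℤ ⊕ D₀ with D₀ divisible, and let f : L → L' be an injective homomorphism of finitely generated free ℤ-modules whose cokernel is annihilated by p^r. Then the induced map D ⊗_ℤ L → D ⊗_ℤ L' has kernel and cokernel annihilated by p^r. -/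
open TensorProduct

/-- If `D ≅ ℤ ⊕ D₀` with `D₀` divisible, and `f : L → L'` is an injective map of finitely
generated free `ℤ`-modules whose cokernel is annihilated by `p^r`, then `D ⊗ L → D ⊗ L'` has
kernel and cokernel annihilated by `p^r`. -/
theorem stmt15 (p : ℕ) (hp : p.Prime) (r : ℕ)
    (D D₀ : Type*) [AddCommGroup D] [AddCommGroup D₀]
    (hdiv : ∀ (d : D₀) (n : ℕ), 0 < n → ∃ e : D₀, n • e = d)
    (iso : D ≃+ ℤ × D₀)
    (L L' : Type*) [AddCommGroup L] [AddCommGroup L']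
    [Module.Free ℤ L] [Module.Finite ℤ L] [Module.Free ℤ L'] [Module.Finite ℤ L']
    (f : L →ₗ[ℤ] L') (hf : Function.Injective f)
    (hcoker : ∀ y : L', ∃ x : L, (p : ℤ) ^ r • y = f x) :
    (∀ x : D ⊗[ℤ] L, LinearMap.lTensor D f x = 0 → (p : ℤ) ^ r • x = 0) ∧
    (∀ y : D ⊗[ℤ] L', ∃ x : D ⊗[ℤ] L, (p : ℤ) ^ r • y = LinearMap.lTensor D f x) := by
  -- Construct a "pseudo-inverse" g with f ∘ g = p^r • id and g ∘ f = p^r • id.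
  obtain ⟨g, hgprop⟩ : ∃ g : L' →ₗ[ℤ] L, ∀ y : L', (p : ℤ) ^ r • y = f (g y) := by
    have hg0 : ∀ y : L', (p : ℤ) ^ r • y = f ((hcoker y).choose) := fun y => (hcoker y).choose_spec
    refine ⟨⟨⟨fun y => (hcoker y).choose, ?_⟩, ?_⟩, hg0⟩
    · intro a b
      apply hf
      rw [map_add, ← hg0, ← hg0, ← hg0, smul_add]
    · intro c y
      apply hf
      rw [map_smul, ← hg0, ← hg0]
      exact smul_comm _ _ _
  have hfg : f.comp g = ((p : ℤ) ^ r) • LinearMap.id := by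
    ext y
    rw [LinearMap.comp_apply, ← hgprop y, LinearMap.smul_apply, LinearMap.id_apply]
  have hgf : g.comp f = ((p : ℤ) ^ r) • LinearMap.id := by
    ext l
    apply hf
    rw [LinearMap.comp_apply, LinearMap.smul_apply, LinearMap.id_apply, map_smul, ← hgprop (f l)]
  constructor
  · intro x hx
    have : LinearMap.lTensor D (g.comp f) x = (p : ℤ) ^ r • x := by
      rw [hgf, LinearMap.lTensor_smul, LinearMap.lTensor_id, LinearMap.smul_apply,
        LinearMap.id_apply]
    rw [← this, LinearMap.lTensor_comp, LinearMap.comp_apply, hx, map_zero]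
  · intro y
    refine ⟨LinearMap.lTensor D g y, ?_⟩
    have : LinearMap.lTensor D (f.comp g) y = (p : ℤ) ^ r • y := by
      rw [hfg, LinearMap.lTensor_smul, LinearMap.lTensor_id, LinearMap.smul_apply,
        LinearMap.id_apply]
    rw [← this, LinearMap.lTensor_comp, LinearMap.comp_apply]
end
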